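/- arXiv:2011.03458 — 2 statements merged into one kernel-verified Lean document; each statement's English description precedes it below -/
import Mathlib

section
/- (Hilbert's identity.) Let n, k : ℕ, let m : ℕ with m ≤ nk, let λ = (λ_1 ≥ ⋯ ≥ λ_k ≥ 0) be a partition of m with λ_1 ≤ n, and set c = nk − 2m ∈ ℤ. Then for every i ≥ 1, D(Δ^i(a_λ)) − Δ^i(D(a_λ)) = i·(c − i + 1) · Δ^{i-1}(a_λ), where the scalar i·(c − i + 1) is taken in ℚ via the cast from ℤ. -/
open MvPolynomial

/-- The operator `D(I) = Σ_{i=1}^{n} i · a_{i-1} · ∂I/∂a_i`. -/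
noncomputable def Dop (n : ℕ) :
    MvPolynomial (Fin (n+1)) ℚ →ₗ[ℚ] MvPolynomial (Fin (n+1)) ℚ :=
  ∑ i : Fin n, ((i : ℚ) + 1) •
    ((LinearMap.mulLeft ℚ (X i.castSucc)).comp (pderiv i.succ).toLinearMap)

/-- The operator `Δ(I) = Σ_{i=0}^{n-1} (n-i) · a_{i+1} · ∂I/∂a_i`. -/
noncomputable def Δop (n : ℕ) :
    MvPolynomial (Fin (n+1)) ℚ →ₗ[ℚ] MvPolynomial (Fin (n+1)) ℚ :=
  ∑ i : Fin n, ((n : ℚ) - (i : ℚ)) •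
    ((LinearMap.mulLeft ℚ (X i.succ)).comp (pderiv i.castSucc).toLinearMap)

/-- `Q_n(k,m)`: span of monomials of degree `k` and weight `m`. -/
noncomputable def Qspace (n k m : ℕ) : Submodule ℚ (MvPolynomial (Fin (n+1)) ℚ) :=
  Submodule.span ℚ { p | ∃ ν : Fin (n+1) →₀ ℕ,
    (∑ i : Fin (n+1), ν i) = k ∧ (∑ i : Fin (n+1), (i : ℕ) * ν i) = m ∧ p = monomial ν (1 : ℚ) }

/-- `S_n(k,m)`: semi-invariants of degree `k` and weight `m`. -/
noncomputable def Sspace (n k m : ℕ) : Submodule ℚ (MvPolynomial (Fin (n+1)) ℚ) :=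
  Qspace n k m ⊓ LinearMap.ker (Dop n)

/-- `p(k,n,m)`: number of partitions of `m` in a `k × n` rectangle. -/
def pRect (k n m : ℕ) : ℕ :=
  (Finset.univ.filter
    (fun P : Nat.Partition m => Multiset.card P.parts ≤ k ∧ ∀ x ∈ P.parts, x ≤ n)).card

/-- Coefficient embedding `ℚ[a] → ℚ[z][a]`. -/
noncomputable def ιmap (n : ℕ) :
    MvPolynomial (Fin (n+1)) ℚ →+* MvPolynomial (Fin (n+1)) (Polynomial ℚ) :=
  MvPolynomial.map (Polynomial.C)

/-- The shear substitution `a_i ↦ a_i' = Σ_{j=0}^{i} C(i,j) a_{i-j} z^j`. -/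
noncomputable def φmap (n : ℕ) :
    MvPolynomial (Fin (n+1)) ℚ →ₐ[ℚ] MvPolynomial (Fin (n+1)) (Polynomial ℚ) :=
  aeval (fun i : Fin (n+1) => ∑ j ∈ Finset.range ((i : ℕ) + 1),
    (C ((Nat.choose (i : ℕ) j : Polynomial ℚ) * Polynomial.X ^ j)) *
      X (⟨(i : ℕ) - j, Nat.lt_of_le_of_lt (Nat.sub_le _ _) i.isLt⟩ : Fin (n+1)))

/-- The vertical shear substitution `a_i ↦ a_i'' = Σ_{j=0}^{n-i} C(n-i,j) a_{i+j} z^j`. -/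
noncomputable def ψmap (n : ℕ) :
    MvPolynomial (Fin (n+1)) ℚ →ₐ[ℚ] MvPolynomial (Fin (n+1)) (Polynomial ℚ) :=
  aeval (fun i : Fin (n+1) => ∑ j ∈ (Finset.range (n - (i : ℕ) + 1)).attach,
    (C ((Nat.choose (n - (i : ℕ)) j.1 : Polynomial ℚ) * Polynomial.X ^ j.1)) *
      X (⟨(i : ℕ) + j.1, by
        have h1 := Finset.mem_range.mp j.2
        have h2 := i.isLt
        omega⟩ : Fin (n+1)))

/-- The weighted total degree of `I`: max of `Σ_i i·ν_i` over monomials of `I`. -/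
def wdeg (n : ℕ) (I : MvPolynomial (Fin (n+1)) ℚ) : ℕ :=
  I.support.sup (fun ν => ∑ i : Fin (n+1), (i : ℕ) * ν i)

/-!
`D`, `Δ` and `H = ⁅D, Δ⁆` are derivations, so the brackets can be computed on the variables:
`H a_j = (n - 2j) a_j` and `⁅H, Δ⁆ = -2Δ`. Thus `(D, H, Δ)` is an `sl₂`-triple, and `a_λ`, a product
of `k` variables of total weight `m`, is an `H`-eigenvector with eigenvalue `c = nk - 2m`. The
identity is then the usual `sl₂` computation: `H Δ^j a_λ = (c - 2j) Δ^j a_λ`, and commuting `D`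
past the `Δ`s one at a time adds up these eigenvalues.
-/

section Sl2

variable {R M : Type*} [CommRing R] [AddCommGroup M] [Module R M]
  {e f h : Module.End R M} {c : R} {v : M}

theorem sl2_h_apply_pow_apply (hhf : ⁅h, f⁆ = (-2 : R) • f) (hv : h v = c • v) (j : ℕ) :
    h ((f ^ j) v) = (c - 2 * j) • (f ^ j) v := by
  induction j with
  | zero => simpa using hv
  | succ j ih =>
    have hcomm : h (f ((f ^ j) v)) - f (h ((f ^ j) v)) = (-2 : R) • f ((f ^ j) v) := by
      simpa [Ring.lie_def] using LinearMap.congr_fun hhf ((f ^ j) v)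
    rw [pow_succ', Module.End.mul_apply, sub_eq_iff_eq_add.mp hcomm, ih, map_smul]
    push_cast
    module

theorem sl2_e_apply_pow_succ_apply_sub (hef : ⁅e, f⁆ = h) (hhf : ⁅h, f⁆ = (-2 : R) • f)
    (hv : h v = c • v) (j : ℕ) :
    e ((f ^ (j + 1)) v) - (f ^ (j + 1)) (e v) = ((j + 1) * (c - j)) • (f ^ j) v := by
  have hcomm (w : M) : e (f w) - f (e w) = h w := by
    simpa [Ring.lie_def] using LinearMap.congr_fun hef w
  induction j with
  | zero => simpa [hcomm] using hv
  | succ j ih =>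
    calc e ((f ^ (j + 2)) v) - (f ^ (j + 2)) (e v)
        = h ((f ^ (j + 1)) v) + f (e ((f ^ (j + 1)) v) - (f ^ (j + 1)) (e v)) := by
          rw [pow_succ' f (j + 1), Module.End.mul_apply, Module.End.mul_apply, ← hcomm, map_sub]
          abel
      _ = _ := by
          rw [ih, map_smul, sl2_h_apply_pow_apply hhf hv, ← Module.End.mul_apply, ← pow_succ']
          push_cast
          module

end Sl2

theorem Derivation.sum_apply {R A M ι : Type*} [CommSemiring R] [CommSemiring A] [Algebra R A]
    [AddCommMonoid M] [Module A M] [Module R M] (s : Finset ι) (D : ι → Derivation R A M) (a : A) :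
    (∑ i ∈ s, D i) a = ∑ i ∈ s, D i a :=
  (congrFun (map_sum Derivation.coeFnAddMonoidHom D s) a).trans (Finset.sum_apply a s _)

theorem Derivation.apply_prod_of_apply_eq_smul {R A ι : Type*} [CommSemiring R] [CommSemiring A]
    [Algebra R A] (D : Derivation R A A) (s : Finset ι) (f : ι → A) (c : ι → R)
    (hf : ∀ j ∈ s, D (f j) = c j • f j) :
    D (∏ j ∈ s, f j) = (∑ j ∈ s, c j) • ∏ j ∈ s, f j := by
  classical
  induction s using Finset.induction_on with
  | empty => simp
  | insert a s ha ih =>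
    rw [Finset.prod_insert ha, Finset.sum_insert ha, Derivation.leibniz,
      ih fun j hj => hf j (Finset.mem_insert_of_mem hj), hf a (Finset.mem_insert_self a s),
      add_smul, smul_eq_mul, smul_eq_mul, mul_smul_comm, mul_comm (∏ j ∈ s, f j), smul_mul_assoc]
    abel

section Operators

local notation "𝒜" n => MvPolynomial (Fin (n + 1)) ℚ

noncomputable def Dder (n : ℕ) : Derivation ℚ (𝒜 n) (𝒜 n) :=
  ∑ i : Fin n, (((i : ℚ) + 1) • X i.castSucc : 𝒜 n) • pderiv i.succ

noncomputable def Δder (n : ℕ) : Derivation ℚ (𝒜 n) (𝒜 n) :=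
  ∑ i : Fin n, (((n : ℚ) - i) • X i.succ : 𝒜 n) • pderiv i.castSucc

noncomputable def Hder (n : ℕ) : Derivation ℚ (𝒜 n) (𝒜 n) :=
  mkDerivation ℚ fun j => ((n : ℚ) - 2 * (j : ℕ)) • X j

variable {n : ℕ}

theorem Dop_eq_Dder : Dop n = Dder n := by
  refine LinearMap.ext fun p => ?_
  simp [Dop, Dder, Derivation.sum_apply]

theorem Δop_eq_Δder : Δop n = Δder n := by
  refine LinearMap.ext fun p => ?_
  simp [Δop, Δder, Derivation.sum_apply]

theorem Dder_X_zero : Dder n (X 0) = 0 := by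
  simp [Dder, Derivation.sum_apply, pderiv_X, Fin.succ_ne_zero]

theorem Dder_X_succ (i : Fin n) : Dder n (X i.succ) = ((i : ℚ) + 1) • X i.castSucc := by
  simp [Dder, Derivation.sum_apply, pderiv_X, Pi.single_apply]

theorem Δder_X_last : Δder n (X (Fin.last n)) = 0 := by
  simp [Δder, Derivation.sum_apply, pderiv_X, Fin.castSucc_ne_last]

theorem Δder_X_castSucc (i : Fin n) : Δder n (X i.castSucc) = ((n : ℚ) - i) • X i.succ := by
  simp [Δder, Derivation.sum_apply, pderiv_X, Pi.single_apply]

theorem Dder_Δder_X (j : Fin (n + 1)) :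
    Dder n (Δder n (X j)) = (((n : ℚ) - (j : ℕ)) * ((j : ℕ) + 1)) • X j := by
  induction j using Fin.lastCases with
  | last => simp [Δder_X_last]
  | cast i => simp [Δder_X_castSucc, Dder_X_succ, smul_smul]

theorem Δder_Dder_X (j : Fin (n + 1)) :
    Δder n (Dder n (X j)) = (((j : ℕ) : ℚ) * (n - (j : ℕ) + 1)) • X j := by
  induction j using Fin.cases with
  | zero => simp [Dder_X_zero]
  | succ i =>
    rw [Dder_X_succ, Derivation.map_smul, Δder_X_castSucc, smul_smul, Fin.val_succ]
    push_cast
    congr 1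
    ring

theorem lie_Dder_Δder : ⁅Dder n, Δder n⁆ = Hder n := by
  refine derivation_ext fun j => ?_
  rw [Derivation.commutator_apply, Dder_Δder_X, Δder_Dder_X, Hder, mkDerivation_X, ← sub_smul]
  congr 1
  ring

theorem lie_Hder_Δder : ⁅Hder n, Δder n⁆ = (-2 : ℚ) • Δder n := by
  refine derivation_ext fun j => ?_
  rw [Derivation.commutator_apply, Derivation.smul_apply]
  induction j using Fin.lastCases with
  | last => simp [Hder, Δder_X_last]
  | cast i =>
    rw [Δder_X_castSucc, Derivation.map_smul, Hder, mkDerivation_X, mkDerivation_X,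
      Derivation.map_smul, Δder_X_castSucc, Fin.val_succ, Fin.val_castSucc]
    push_cast
    module

theorem Hder_prod_X {k : ℕ} (l : Fin k → Fin (n + 1)) :
    Hder n (∏ j, X (l j)) = ((n : ℚ) * k - 2 * ∑ j, ((l j : ℕ) : ℚ)) • ∏ j, X (l j) := by
  rw [Derivation.apply_prod_of_apply_eq_smul _ _ _ (fun j => (n : ℚ) - 2 * (l j : ℕ))
    fun j _ => mkDerivation_X ℚ _ (l j), Finset.sum_sub_distrib, Finset.sum_const, Finset.card_univ, Fintype.card_fin, nsmul_eq_mul,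
    Finset.mul_sum, mul_comm (k : ℚ)]

theorem lie_Dop_Δop : ⁅Dop n, Δop n⁆ = (Hder n : Module.End ℚ (𝒜 n)) := by
  rw [Dop_eq_Dder, Δop_eq_Δder, ← Derivation.commutator_coe_linear_map, lie_Dder_Δder]

theorem lie_Hder_Δop : ⁅(Hder n : Module.End ℚ (𝒜 n)), Δop n⁆ = (-2 : ℚ) • Δop n := by
  rw [Δop_eq_Δder, ← Derivation.commutator_coe_linear_map, lie_Hder_Δder,
    Derivation.coe_smul_linearMap]

end Operators

theorem hilbert_identity_general (n k m : ℕ)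
    (l : Fin k → ℕ)
    (hle : ∀ j, l j ≤ n) (hsum : ∑ j, l j = m)
    (aLam : MvPolynomial (Fin (n+1)) ℚ)
    (haLam : aLam = ∏ j : Fin k, X (⟨l j, Nat.lt_succ_of_le (hle j)⟩ : Fin (n+1)))
    (i : ℕ) :
    Dop n ((Δop n ^ i) aLam) - (Δop n ^ i) (Dop n aLam) =
      (((i : ℤ) * (((n : ℤ) * k - 2 * m) - i + 1) : ℤ) : ℚ) • (Δop n ^ (i - 1)) aLam := by
  obtain _ | i := i
  · simp
  have hweight : Hder n aLam = ((n : ℚ) * k - 2 * m) • aLam := by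
    rw [haLam, Hder_prod_X, ← hsum]
    push_cast
    rfl
  rw [sl2_e_apply_pow_succ_apply_sub lie_Dop_Δop lie_Hder_Δop hweight, Nat.add_sub_cancel]
  congr 1
  push_cast
  ring

/-- Hilbert's identity
`D Δ^i (a_λ) - Δ^i D (a_λ) = i (c - i + 1) Δ^{i-1} (a_λ)` with `c = nk - 2m`,
for a partition `λ` of `m` contained in a `k × n` rectangle. -/
theorem hilbert_identity (n k m : ℕ) (hm : m ≤ n * k)
    (l : Fin k → ℕ) (hanti : ∀ j j' : Fin k, j ≤ j' → l j' ≤ l j)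
    (hle : ∀ j, l j ≤ n) (hsum : ∑ j, l j = m)
    (aLam : MvPolynomial (Fin (n+1)) ℚ)
    (haLam : aLam = ∏ j : Fin k, X (⟨l j, Nat.lt_succ_of_le (hle j)⟩ : Fin (n+1)))
    (i : ℕ) (hi : 1 ≤ i) :
    Dop n ((Δop n ^ i) aLam) - (Δop n ^ i) (Dop n aLam) =
      (((i : ℤ) * (((n : ℤ) * k - 2 * m) - i + 1) : ℤ) : ℚ) • (Δop n ^ (i - 1)) aLam :=
  hilbert_identity_general n k m l hle hsum aLam haLam i
end

section
/- (Unimodality of the Gaussian coefficients.) Let n, k : ℕ and let m : ℕ satisfy 1 ≤ m and 2m ≤ nk. Then p(k,n,m−1) ≤ p(k,n,m). -/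
open MvPolynomial

/-!
Encode a partition in the `k × n` box as the monomial `∏ aᵢ^{νᵢ}` of degree `k` and weight `m`,
where `νᵢ` counts the rows of length `i` (`ν₀` the empty ones); then `p(k,n,m) = dim Q_n(k,m)`.
The derivations `D` (lowering the weight) and `Δ` (raising it) have commutator
`Σⱼ (n - 2j) aⱼ ∂/∂aⱼ`, which by Euler's identity acts on `Q_n(k,m)` as the scalar `nk - 2m`.
So `D` and `Δ` span a copy of `sl₂`, and the usual string argument shows that
`Δ : Q_n(k,m-1) → Q_n(k,m)` is injective while `2(m-1) < nk`.
-/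

namespace MvPolynomial

variable {R σ M : Type*} [CommRing R] [AddCancelCommMonoid M] {w : σ → M} {φ : MvPolynomial σ R}

theorem IsWeightedHomogeneous.X_mul_pderiv {n n' : M} {i j : σ}
    (h : φ.IsWeightedHomogeneous w n) (h' : n' + w j = n + w i) :
    (X i * pderiv j φ).IsWeightedHomogeneous w n' := by
  classical
  have hXφ : (pderiv j (X i * φ)).IsWeightedHomogeneous w n' :=
    ((isWeightedHomogeneous_X R w i).mul h).pderiv (by rw [h', add_comm])
  rw [Derivation.leibniz, pderiv_X, smul_eq_mul, smul_eq_mul] at hXφ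
  by_cases hij : j = i
  · subst hij
    obtain rfl : n' = n := add_right_cancel h'
    simpa using hXφ.sub h
  · simpa [Pi.single_apply, Ne.symm hij, hij] using hXφ

end MvPolynomial

section StringArgument

variable {K V : Type*} [Field K] [AddCommGroup V] [Module K V]
  {D Δ : Module.End K V} {W : ℕ → Submodule K V} {N : ℕ}

theorem pow_apply_mem_of_lowering (hD : ∀ i, ∀ v ∈ W (i + 1), D v ∈ W i) {j : ℕ} {v : V}
    (hv : v ∈ W j) {i : ℕ} (hi : i ≤ j) : (D ^ i) v ∈ W (j - i) := by
  induction i with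
  | zero => simpa using hv
  | succ i ih =>
    rw [pow_succ', Module.End.mul_apply]
    exact hD _ _ (by rw [show j - i = j - (i + 1) + 1 by omega] at ih; exact ih (by omega))

theorem raise_pow_succ_apply_of_raise_eq_zero (hD : ∀ i, ∀ v ∈ W (i + 1), D v ∈ W i)
    (hDΔ : ∀ i, ∀ v ∈ W i, D (Δ v) - Δ (D v) = ((N : K) - 2 * i) • v)
    {j : ℕ} {v : V} (hv : v ∈ W j) (hΔv : Δ v = 0) {i : ℕ} (hi : i ≤ j) :
    Δ ((D ^ (i + 1)) v) = -(((i : K) + 1) * (N - 2 * j + i)) • (D ^ i) v := by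
  induction i with
  | zero =>
    have := hDΔ j v hv
    rw [hΔv, map_zero, zero_sub, neg_eq_iff_eq_neg] at this
    simp [this, ← neg_smul]
  | succ i ih =>
    have hcomm := hDΔ _ _ (pow_apply_mem_of_lowering hD hv hi)
    rw [ih (by omega), map_smul, ← Module.End.mul_apply, ← pow_succ', Nat.cast_sub hi] at hcomm
    rw [pow_succ' D (i + 1), Module.End.mul_apply]
    push_cast at hcomm ⊢
    linear_combination (norm := module) -hcomm

theorem eq_zero_of_raise_eq_zero [CharZero K] (hD : ∀ i, ∀ v ∈ W (i + 1), D v ∈ W i)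
    (hD₀ : ∀ v ∈ W 0, D v = 0)
    (hDΔ : ∀ i, ∀ v ∈ W i, D (Δ v) - Δ (D v) = ((N : K) - 2 * i) • v)
    {j : ℕ} (hj : 2 * j < N) {v : V} (hv : v ∈ W j) (hΔv : Δ v = 0) : v = 0 := by
  -- `Δ` maps each `Dⁱ⁺¹ v` to a nonzero multiple of `Dⁱ v`, and `Dʲ⁺¹ v = 0`.
  have htop : (D ^ (j + 1)) v = 0 := by
    rw [pow_succ', Module.End.mul_apply]
    exact hD₀ _ (by simpa using pow_apply_mem_of_lowering hD hv le_rfl)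
  have hstep (i : ℕ) (hi : i < j + 1) (h : (D ^ (i + 1)) v = 0) : (D ^ i) v = 0 := by
    have hc : ((i : K) + 1) * (N - 2 * j + i) ≠ 0 := by
      have : ((i : K) + 1) * (N - 2 * j + i) = (((i + 1) * (N - 2 * j + i) : ℕ) : K) := by
        push_cast [Nat.cast_sub hj.le]
        ring
      rw [this, Nat.cast_ne_zero]
      exact Nat.mul_ne_zero (by omega) (by omega)
    have := raise_pow_succ_apply_of_raise_eq_zero hD hDΔ hv hΔv (Nat.lt_succ_iff.mp hi)
    rw [h, map_zero, eq_comm, smul_eq_zero] at this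
    exact this.resolve_left (neg_ne_zero.mpr hc)
  simpa using
    Nat.decreasingInduction (motive := fun i _ => (D ^ i) v = 0) hstep htop (Nat.zero_le _)

end StringArgument

def rectExponents (n k m : ℕ) : Set (Fin (n+1) →₀ ℕ) :=
  {ν | ∑ i, ν i = k ∧ ∑ i : Fin (n+1), (i : ℕ) * ν i = m}

lemma Qspace_eq_restrictSupport (n k m : ℕ) :
    Qspace n k m = restrictSupport ℚ (rectExponents n k m) := by
  rw [restrictSupport_eq_span, Qspace]
  congr 1
  ext p
  simp [rectExponents, and_assoc, eq_comm]

lemma mem_Qspace_iff {n k m : ℕ} {p : MvPolynomial (Fin (n+1)) ℚ} :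
    p ∈ Qspace n k m ↔
      p.IsHomogeneous k ∧ p.IsWeightedHomogeneous (fun i : Fin (n+1) => (i : ℕ)) m := by
  have hdeg (ν : Fin (n+1) →₀ ℕ) : Finsupp.weight 1 ν = ∑ i, ν i := by
    simp [Finsupp.weight_apply, Finsupp.sum_fintype]
  have hwt (ν : Fin (n+1) →₀ ℕ) :
      Finsupp.weight (fun i : Fin (n+1) => (i : ℕ)) ν = ∑ i : Fin (n+1), (i : ℕ) * ν i := by
    simp [Finsupp.weight_apply, Finsupp.sum_fintype, mul_comm]
  simp only [Qspace_eq_restrictSupport, mem_restrictSupport_iff, IsHomogeneous,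
    IsWeightedHomogeneous, Set.subset_def, Finset.mem_coe, mem_support_iff, rectExponents,
    Set.mem_ofPred_eq, hdeg, hwt]
  exact ⟨fun h => ⟨fun d hd => (h d hd).1, fun d hd => (h d hd).2⟩,
    fun h d hd => ⟨h.1 hd, h.2 hd⟩⟩

lemma finrank_Qspace (n k m : ℕ) :
    Module.finrank ℚ (Qspace n k m) = Nat.card (rectExponents n k m) := by
  rw [Qspace_eq_restrictSupport, Module.finrank_eq_nat_card_basis (basisRestrictSupport ℚ _)]

instance (n k m : ℕ) : FiniteDimensional ℚ (Qspace n k m) :=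
  have : FiniteDimensional ℚ (homogeneousSubmodule (Fin (n+1)) ℚ k) :=
    Module.Finite.iff_fg.mpr (homogeneousSubmodule_fg _ _ k)
  Submodule.finiteDimensional_of_le (S₂ := homogeneousSubmodule (Fin (n+1)) ℚ k)
    fun _ hp => (mem_Qspace_iff.mp hp).1

section Operators

variable {n k : ℕ}

lemma Dop_apply (p : MvPolynomial (Fin (n+1)) ℚ) :
    Dop n p = ∑ i : Fin n, ((i : ℚ) + 1) • (X i.castSucc * pderiv i.succ p) := by
  simp [Dop]

lemma Δop_apply (p : MvPolynomial (Fin (n+1)) ℚ) :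
    Δop n p = ∑ i : Fin n, ((n : ℚ) - i) • (X i.succ * pderiv i.castSucc p) := by
  simp [Δop]

lemma X_mul_pderiv_mem_Qspace {m m' : ℕ} {p : MvPolynomial (Fin (n+1)) ℚ} {i j : Fin (n+1)}
    (hp : p ∈ Qspace n k m) (hm : m' + j = m + i) : X i * pderiv j p ∈ Qspace n k m' := by
  rw [mem_Qspace_iff] at hp ⊢
  exact ⟨hp.1.X_mul_pderiv rfl, hp.2.X_mul_pderiv hm⟩

lemma Δop_mem_Qspace {m : ℕ} {p : MvPolynomial (Fin (n+1)) ℚ} (hp : p ∈ Qspace n k m) :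
    Δop n p ∈ Qspace n k (m + 1) := by
  rw [Δop_apply]
  exact Submodule.sum_mem _ fun i _ =>
    Submodule.smul_mem _ _
      (X_mul_pderiv_mem_Qspace hp (by simp only [Fin.val_castSucc, Fin.val_succ]; omega))

lemma Dop_mem_Qspace {m : ℕ} {p : MvPolynomial (Fin (n+1)) ℚ} (hp : p ∈ Qspace n k (m + 1)) :
    Dop n p ∈ Qspace n k m := by
  rw [Dop_apply]
  exact Submodule.sum_mem _ fun i _ =>
    Submodule.smul_mem _ _
      (X_mul_pderiv_mem_Qspace hp (by simp only [Fin.val_castSucc, Fin.val_succ]; omega))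

lemma Dop_eq_zero_of_mem_Qspace_zero {p : MvPolynomial (Fin (n+1)) ℚ} (hp : p ∈ Qspace n k 0) :
    Dop n p = 0 := by
  have hvars (i : Fin n) : i.succ ∉ p.vars := by
    rw [Qspace_eq_restrictSupport, mem_restrictSupport_iff] at hp
    simp only [mem_vars_iff_mem_support, not_exists, not_and, Finsupp.mem_support_iff, not_not]
    intro d hd
    have := Finset.sum_eq_zero_iff.mp (hp hd).2 i.succ (Finset.mem_univ _)
    simpa using this
  simp [Dop_apply, pderiv_eq_zero_of_notMem_vars (hvars _)]

end Operators

section Commutator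

variable {n : ℕ}

noncomputable def loweringDerivation (n : ℕ) :
    Derivation ℚ (MvPolynomial (Fin (n+1)) ℚ) (MvPolynomial (Fin (n+1)) ℚ) :=
  ∑ i : Fin n, ((i : ℚ) + 1) • ((X i.castSucc : MvPolynomial (Fin (n+1)) ℚ) • pderiv i.succ)

noncomputable def raisingDerivation (n : ℕ) :
    Derivation ℚ (MvPolynomial (Fin (n+1)) ℚ) (MvPolynomial (Fin (n+1)) ℚ) :=
  ∑ i : Fin n, ((n : ℚ) - i) • ((X i.succ : MvPolynomial (Fin (n+1)) ℚ) • pderiv i.castSucc)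

lemma loweringDerivation_apply (p : MvPolynomial (Fin (n+1)) ℚ) :
    loweringDerivation n p = Dop n p := by
  rw [loweringDerivation, ← Derivation.coeFnAddMonoidHom_apply, map_sum, Finset.sum_apply]
  simp [Dop_apply, Derivation.smul_apply]

lemma raisingDerivation_apply (p : MvPolynomial (Fin (n+1)) ℚ) :
    raisingDerivation n p = Δop n p := by
  rw [raisingDerivation, ← Derivation.coeFnAddMonoidHom_apply, map_sum, Finset.sum_apply]
  simp [Δop_apply, Derivation.smul_apply]

-- In `Fin (n+1)`, `0 - 1 = n` and `n + 1 = 0`; the coefficients vanish at these wrap-arounds.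
lemma Dop_X (j : Fin (n+1)) : Dop n (X j) = (j : ℚ) • X (j - 1) := by
  classical
  cases j using Fin.cases with
  | zero => simp [Dop_apply, pderiv_X, Fin.succ_ne_zero]
  | succ i =>
    rw [Dop_apply, Finset.sum_eq_single i]
    · simp [show i.succ - 1 = i.castSucc by rw [← Fin.coeSucc_eq_succ, add_sub_cancel_right]]
    · intro l _ hl
      simp [pderiv_X, Fin.succ_inj, hl]
    · simp

lemma Δop_X (j : Fin (n+1)) : Δop n (X j) = ((n : ℚ) - j) • X (j + 1) := by
  classical
  cases j using Fin.lastCases with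
  | last => simp [Δop_apply, pderiv_X, Fin.castSucc_ne_last]
  | cast i =>
    rw [Δop_apply, Finset.sum_eq_single i]
    · simp [Fin.coeSucc_eq_succ]
    · intro l _ hl
      simp [pderiv_X, Fin.castSucc_inj, hl]
    · simp

lemma Dop_Δop_X_sub_Δop_Dop_X (j : Fin (n+1)) :
    Dop n (Δop n (X j)) - Δop n (Dop n (X j)) = ((n : ℚ) - 2 * j) • X j := by
  rw [Δop_X, map_smul, Dop_X, Dop_X, map_smul, Δop_X, smul_smul, smul_smul,
    add_sub_cancel_right, sub_add_cancel, ← sub_smul, Fin.val_add_one, Fin.coe_sub_one]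
  congr 1
  simp only [Fin.ext_iff, Fin.val_last, Fin.val_zero]
  split_ifs with hlast hzero hzero
  · simp [← hlast, hzero]
  · rw [hlast] at hzero ⊢
    rw [Nat.cast_sub (Nat.one_le_iff_ne_zero.mpr hzero)]
    ring
  · simp [hzero]
  · rw [Nat.cast_sub (Nat.one_le_iff_ne_zero.mpr hzero)]
    push_cast
    ring

lemma commutator_loweringDerivation_raisingDerivation :
    ⁅loweringDerivation n, raisingDerivation n⁆ =
      ∑ j : Fin (n+1), ((n : ℚ) - 2 * j) • ((X j : MvPolynomial (Fin (n+1)) ℚ) • pderiv j) := by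
  classical
  refine derivation_ext fun j => ?_
  rw [Derivation.commutator_apply, loweringDerivation_apply, loweringDerivation_apply,
    raisingDerivation_apply, raisingDerivation_apply, Dop_Δop_X_sub_Δop_Dop_X,
    ← Derivation.coeFnAddMonoidHom_apply, map_sum, Finset.sum_apply, Finset.sum_eq_single j]
  · simp [Derivation.smul_apply]
  · intro l _ hl
    simp [Derivation.smul_apply, pderiv_X, hl]
  · simp

lemma Dop_Δop_sub_Δop_Dop {k m : ℕ} {p : MvPolynomial (Fin (n+1)) ℚ} (hp : p ∈ Qspace n k m) :
    Dop n (Δop n p) - Δop n (Dop n p) = ((n : ℚ) * k - 2 * m) • p := by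
  obtain ⟨hdeg, hwt⟩ := mem_Qspace_iff.mp hp
  have hEuler := hdeg.sum_X_mul_pderiv
  have hEulerWeighted := hwt.sum_weight_X_mul_pderiv
  rw [← loweringDerivation_apply, ← loweringDerivation_apply, ← raisingDerivation_apply,
    ← raisingDerivation_apply, ← Derivation.commutator_apply,
    commutator_loweringDerivation_raisingDerivation, ← Derivation.coeFnAddMonoidHom_apply,
    map_sum, Finset.sum_apply]
  simp only [Derivation.coeFnAddMonoidHom_apply, Derivation.smul_apply, smul_eq_mul, sub_smul,
    Finset.sum_sub_distrib]
  simp_rw [mul_smul, ← Finset.smul_sum, Nat.cast_smul_eq_nsmul, hEuler, hEulerWeighted]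

end Commutator

lemma finrank_Qspace_le_finrank_Qspace_succ {n k j : ℕ} (hj : 2 * j < n * k) :
    Module.finrank ℚ (Qspace n k j) ≤ Module.finrank ℚ (Qspace n k (j + 1)) := by
  refine LinearMap.finrank_le_finrank_of_injective
    (f := (Δop n).restrict fun _ hp => Δop_mem_Qspace hp) ((injective_iff_map_eq_zero _).mpr ?_)
  rintro ⟨p, hp⟩ hΔp
  exact Subtype.ext (eq_zero_of_raise_eq_zero (W := Qspace n k)
    (fun _ _ => Dop_mem_Qspace) (fun _ => Dop_eq_zero_of_mem_Qspace_zero)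
    (fun _ _ hv => by rw [Dop_Δop_sub_Δop_Dop hv, Nat.cast_mul]) hj hp (congrArg Subtype.val hΔp))

section Counting

open Finsupp

lemma Multiset.filter_ne_add_replicate_count {α : Type*} [DecidableEq α] (s : Multiset α) (a : α) :
    s.filter (· ≠ a) + Multiset.replicate (s.count a) a = s := by
  rw [← Multiset.filter_eq']
  conv_rhs => rw [← Multiset.filter_add_not (· ≠ a) s]
  simp only [ne_eq, not_not]

def boxMultisets (n k m : ℕ) : Set (Multiset ℕ) :=
  {s | Multiset.card s = k ∧ s.sum = m ∧ ∀ x ∈ s, x ≤ n}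

def rectPartitionEquiv (n k m : ℕ) :
    {P : Nat.Partition m // Multiset.card P.parts ≤ k ∧ ∀ x ∈ P.parts, x ≤ n} ≃
      boxMultisets n k m where
  toFun P := ⟨P.1.parts + Multiset.replicate (k - Multiset.card P.1.parts) 0, by
    obtain ⟨P, hk, hn⟩ := P
    refine ⟨by simp only [Multiset.card_add, Multiset.card_replicate]; omega,
      by simp [P.parts_sum], ?_⟩
    simp only [Multiset.mem_add, Multiset.mem_replicate]
    rintro x (hx | ⟨-, rfl⟩)
    exacts [hn x hx, Nat.zero_le n]⟩
  invFun s := ⟨⟨s.1.filter (· ≠ 0), fun hx => Nat.pos_of_ne_zero (Multiset.mem_filter.mp hx).2, by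
    have := congrArg Multiset.sum (s.1.filter_ne_add_replicate_count 0)
    simpa [s.2.2.1] using this⟩,
    (Multiset.card_le_card (Multiset.filter_le _ _)).trans_eq s.2.1,
    fun x hx => s.2.2.2 x (Multiset.mem_of_mem_filter hx)⟩
  left_inv P := by
    ext1; ext1
    simp [Multiset.filter_add, Multiset.filter_eq_self.mpr fun x hx => (P.1.parts_pos hx).ne',
      Multiset.mem_replicate]
  right_inv := by
    rintro ⟨s, rfl, -, -⟩
    have hcard := congrArg Multiset.card (s.filter_ne_add_replicate_count 0)
    rw [Multiset.card_add, Multiset.card_replicate] at hcard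
    ext1
    dsimp only
    rw [← hcard, Nat.add_sub_cancel_left, s.filter_ne_add_replicate_count]

lemma card_map_val_toMultiset {n : ℕ} (ν : Fin (n+1) →₀ ℕ) :
    Multiset.card ((toMultiset ν).map Fin.val) = ∑ i, ν i := by
  simp [card_toMultiset, sum_fintype]

lemma sum_map_val_toMultiset {n : ℕ} (ν : Fin (n+1) →₀ ℕ) :
    ((toMultiset ν).map Fin.val).sum = ∑ i : Fin (n+1), (i : ℕ) * ν i := by
  rw [Finset.sum_multiset_map_count]
  simp only [toFinset_toMultiset, count_toMultiset, smul_eq_mul, mul_comm]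
  exact Finset.sum_subset (Finset.subset_univ _) (by simp_all)

lemma image_rectExponents (n k m : ℕ) :
    (fun ν => (toMultiset ν).map Fin.val) '' rectExponents n k m = boxMultisets n k m := by
  ext s
  simp only [Set.mem_image, rectExponents, boxMultisets, Set.mem_ofPred_eq]
  constructor
  · rintro ⟨ν, ⟨hk, hm⟩, rfl⟩
    refine ⟨by rw [card_map_val_toMultiset, hk], by rw [sum_map_val_toMultiset, hm], ?_⟩
    simp only [Multiset.mem_map]
    rintro _ ⟨i, -, rfl⟩
    exact Nat.lt_succ_iff.mp i.isLt
  · rintro ⟨hk, hm, hn⟩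
    lift s to Multiset (Fin (n+1)) using fun x hx => Nat.lt_succ_of_le (hn x hx)
    classical
    refine ⟨Multiset.toFinsupp s, ?_, by rw [Multiset.toFinsupp_toMultiset]⟩
    rw [← Multiset.toFinsupp_toMultiset s] at hk hm
    exact ⟨by rw [← card_map_val_toMultiset, hk], by rw [← sum_map_val_toMultiset, hm]⟩

lemma pRect_eq_card_rectExponents (n k m : ℕ) : pRect k n m = Nat.card (rectExponents n k m) := by
  have hinj : Function.Injective fun ν : Fin (n+1) →₀ ℕ => (toMultiset ν).map Fin.val :=
    (Multiset.map_injective Fin.val_injective).comp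
      (Function.LeftInverse.injective toMultiset_toFinsupp)
  rw [← Nat.card_image_of_injective hinj,
    image_rectExponents, ← Nat.card_congr (rectPartitionEquiv n k m), pRect,
    Nat.card_eq_fintype_card, Fintype.card_subtype]

end Counting

theorem gaussian_unimodal_general (n k m : ℕ) (h : 2 * m ≤ n * k) :
    pRect k n (m - 1) ≤ pRect k n m := by
  obtain _ | m := m
  · exact le_rfl
  rw [pRect_eq_card_rectExponents, pRect_eq_card_rectExponents, ← finrank_Qspace,
    ← finrank_Qspace, Nat.add_sub_cancel]
  exact finrank_Qspace_le_finrank_Qspace_succ (by omega)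

/-- unimodality of the Gaussian coefficients. -/
theorem gaussian_unimodal (n k m : ℕ) (hm : 1 ≤ m) (h : 2 * m ≤ n * k) :
    pRect k n (m - 1) ≤ pRect k n m :=
  gaussian_unimodal_general n k m h
end
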